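/- arXiv:2001.10986 — 4 statements merged into one kernel-verified Lean document; each statement's English description precedes it below -/
import Mathlib

section
/- Any pair of scaling factors (u*, v*) with π* = (u*⊗v*)·K, where π* is the unique minimizer of KL(·|K) over Π(μ̂,ν̂), satisfies the Schrödinger integral equations: u*(x)·∫_Y k(x,y')·v*(y') dν(y') = dμ̂/dμ(x) for μ-a.e. x ∈ X, and v*(y)·∫_X k(x',y)·u*(x') dμ(x') = dν̂/dν(y) for ν-a.e. y ∈ Y. -/
open MeasureTheory ENNReal Filter Topology

noncomputable section

/-- `phi s = s * log s - s + 1` (note `phi 0 = 1` since `Real.log 0 = 0`);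
this is the integrand of the Kullback--Leibler divergence. -/
def phi (s : ℝ) : ℝ := s * Real.log s - s + 1

open Classical in
/-- Kullback--Leibler divergence `KL(ρ|σ) ∈ [0,∞]`: `∫ phi (dρ/dσ) dσ` if `ρ ≪ σ`,
and `∞` otherwise (nonnegativity of `ρ` is automatic for measures). -/
def KL {Z : Type*} [MeasurableSpace Z] (ρ σ : Measure Z) : ℝ≥0∞ :=
  if ρ ≪ σ then ∫⁻ z, ENNReal.ofReal (phi ((ρ.rnDeriv σ) z).toReal) ∂σ else ⊤

/-- The set `Π(μh, νh)` of transport plans with marginals `μh` and `νh`. -/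
def Coupling {X Y : Type*} [MeasurableSpace X] [MeasurableSpace Y]
    (μh : Measure X) (νh : Measure Y) : Set (Measure (X × Y)) :=
  {π | π.map Prod.fst = μh ∧ π.map Prod.snd = νh}

/-- The Gibbs kernel measure `K = exp(-c/ε) ⋅ (μ ⊗ ν)`. -/
def Kmeas {X Y : Type*} [MeasurableSpace X] [MeasurableSpace Y]
    (μ : Measure X) (ν : Measure Y) [SFinite ν] (c : X × Y → ℝ) (ε : ℝ) : Measure (X × Y) :=
  (μ.prod ν).withDensity fun p => ENNReal.ofReal (Real.exp (-c p / ε))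

/-- The product density `(u ⊗ v)(x,y) = u x * v y`, as an `ℝ≥0∞`-valued density. -/
def prodDensity {X Y : Type*} (u : X → ℝ) (v : Y → ℝ) : X × Y → ℝ≥0∞ :=
  fun p => ENNReal.ofReal (u p.1 * v p.2)

/-- `L^∞₊(μ)`: measurable, a.e. nonnegative, essentially bounded functions. -/
def LinftyPlus {Z : Type*} [MeasurableSpace Z] (μ : Measure Z) (u : Z → ℝ) : Prop :=
  Measurable u ∧ (∀ᵐ z ∂μ, 0 ≤ u z) ∧ ∃ C : ℝ, ∀ᵐ z ∂μ, u z ≤ C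

lemma map_fst_withDensity_prod {X Y : Type*} [MeasurableSpace X] [MeasurableSpace Y]
    (μ : Measure X) (ν : Measure Y) [SFinite μ] [SFinite ν]
    (g : X × Y → ℝ≥0∞) (hg : Measurable g) :
    ((μ.prod ν).withDensity g).map Prod.fst
      = μ.withDensity (fun x => ∫⁻ y, g (x, y) ∂ν) := by
  ext s hs
  rw [Measure.map_apply measurable_fst hs,
    withDensity_apply _ (measurable_fst hs), withDensity_apply _ hs,
    ← Set.prod_univ, ← Measure.restrict_prod_eq_prod_univ,
    MeasureTheory.lintegral_prod _ hg.aemeasurable]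

lemma map_snd_withDensity_prod {X Y : Type*} [MeasurableSpace X] [MeasurableSpace Y]
    (μ : Measure X) (ν : Measure Y) [SFinite μ] [SFinite ν]
    (g : X × Y → ℝ≥0∞) (hg : Measurable g) :
    ((μ.prod ν).withDensity g).map Prod.snd
      = ν.withDensity (fun y => ∫⁻ x, g (x, y) ∂μ) := by
  ext s hs
  have hre : (μ.prod ν).restrict (Set.univ ×ˢ s) = μ.prod (ν.restrict s) := by
    rw [← Measure.prod_restrict, Measure.restrict_univ]
  rw [Measure.map_apply measurable_snd hs,
    withDensity_apply _ (measurable_snd hs), withDensity_apply _ hs,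
    ← Set.univ_prod, hre,
    MeasureTheory.lintegral_prod_symm _ hg.aemeasurable]

lemma schrod_aux {X Y : Type*} [MeasurableSpace X] [MeasurableSpace Y]
    (μ : Measure X) (ν : Measure Y) [SigmaFinite μ] [SFinite ν]
    (c : X × Y → ℝ) (hc : Measurable c) (ε : ℝ)
    (μh : Measure X)
    (u : X → ℝ) (v : Y → ℝ) (hu : Measurable u) (hv : Measurable v)
    (hu0 : ∀ x, 0 ≤ u x) (hv0 : ∀ y, 0 ≤ v y)
    (hmarg : μ.withDensity (fun x => ∫⁻ y,
      ENNReal.ofReal (Real.exp (-c (x, y) / ε)) * ENNReal.ofReal (u x * v y) ∂ν) = μh) :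
    ∀ᵐ x ∂μ, u x * ∫ y, Real.exp (-c (x, y) / ε) * v y ∂ν = (μh.rnDeriv μ x).toReal := by
  set D : X → ℝ≥0∞ := fun x => ∫⁻ y,
      ENNReal.ofReal (Real.exp (-c (x, y) / ε)) * ENNReal.ofReal (u x * v y) ∂ν with hD
  have hDm : Measurable D := by
    apply Measurable.lintegral_prod_right
    exact (((hc.neg.div_const ε).exp.ennreal_ofReal).mul
      (((hu.comp measurable_fst).mul (hv.comp measurable_snd)).ennreal_ofReal))
  have hrn : μh.rnDeriv μ =ᵐ[μ] D := hmarg ▸ Measure.rnDeriv_withDensity μ hDm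
  filter_upwards [hrn] with x hx
  rw [hx]
  have hDx : D x = ENNReal.ofReal (u x)
      * ∫⁻ y, ENNReal.ofReal (Real.exp (-c (x, y) / ε) * v y) ∂ν := by
    have hm : Measurable fun y => ENNReal.ofReal (Real.exp (-c (x, y) / ε) * v y) :=
      (((hc.comp measurable_prodMk_left).neg.div_const ε).exp.mul hv).ennreal_ofReal
    rw [hD, ← lintegral_const_mul _ hm]
    simp only []
    congr 1
    ext y
    rw [ENNReal.ofReal_mul (hu0 x), ENNReal.ofReal_mul (Real.exp_nonneg _)]
    ring
  have hint : ∫ y, Real.exp (-c (x, y) / ε) * v y ∂ν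
      = (∫⁻ y, ENNReal.ofReal (Real.exp (-c (x, y) / ε) * v y) ∂ν).toReal :=
    integral_eq_lintegral_of_nonneg_ae
      (Filter.Eventually.of_forall fun y => mul_nonneg (Real.exp_nonneg _) (hv0 y))
      (((hc.comp measurable_prodMk_left).neg.div_const ε).exp.mul hv).aestronglyMeasurable
  rw [hint, hDx, ENNReal.toReal_mul, ENNReal.toReal_ofReal (hu0 x)]

/-- Proposition 2.4 (iii): any scaling factors `(u*,v*)` of the
unique minimizer satisfy the Schrödinger integral equations. -/
theorem schroedinger_equations
    {X Y : Type*} [MetricSpace X] [CompactSpace X] [MeasurableSpace X] [BorelSpace X]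
    [MetricSpace Y] [CompactSpace Y] [MeasurableSpace Y] [BorelSpace Y]
    (μ : Measure X) (ν : Measure Y) [IsProbabilityMeasure μ] [IsProbabilityMeasure ν]
    (c : X × Y → ℝ) (hc : Measurable c) (cmax : ℝ)
    (hc0 : ∀ p, 0 ≤ c p) (hcmax : ∀ p, c p ≤ cmax)
    (ε : ℝ) (hε : 0 < ε)
    (μh : Measure X) (νh : Measure Y)
    (hμac : μh ≪ μ) (hνac : νh ≪ ν)
    (hmass : μh Set.univ = νh Set.univ) (hposmass : 0 < μh Set.univ)
    (hμbd : ∃ C : ℝ≥0∞, C ≠ ⊤ ∧ ∀ᵐ x ∂μ, μh.rnDeriv μ x ≤ C)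
    (hνbd : ∃ C : ℝ≥0∞, C ≠ ⊤ ∧ ∀ᵐ y ∂ν, νh.rnDeriv ν y ≤ C)
    (πopt : Measure (X × Y)) (hπopt : πopt ∈ Coupling μh νh)
    (hmin : ∀ π ∈ Coupling μh νh, KL πopt (Kmeas μ ν c ε) ≤ KL π (Kmeas μ ν c ε))
    (u : X → ℝ) (v : Y → ℝ) (hu : Measurable u) (hv : Measurable v)
    (hu0 : ∀ x, 0 ≤ u x) (hv0 : ∀ y, 0 ≤ v y)
    (hform : πopt = (Kmeas μ ν c ε).withDensity (prodDensity u v)) :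
    (∀ᵐ x ∂μ, u x * ∫ y, Real.exp (-c (x, y) / ε) * v y ∂ν = (μh.rnDeriv μ x).toReal) ∧
    (∀ᵐ y ∂ν, v y * ∫ x, Real.exp (-c (x, y) / ε) * u x ∂μ = (νh.rnDeriv ν y).toReal) := by
  have hd : Measurable (prodDensity u v) :=
    ((hu.comp measurable_fst).mul (hv.comp measurable_snd)).ennreal_ofReal
  have he : Measurable fun p : X × Y => ENNReal.ofReal (Real.exp (-c p / ε)) :=
    (hc.neg.div_const ε).exp.ennreal_ofReal
  have hπ : πopt = (μ.prod ν).withDensity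
      (fun p => ENNReal.ofReal (Real.exp (-c p / ε)) * ENNReal.ofReal (u p.1 * v p.2)) := by
    rw [hform, Kmeas, ← withDensity_mul _ he hd]
    rfl
  have hg : Measurable fun p : X × Y =>
      ENNReal.ofReal (Real.exp (-c p / ε)) * ENNReal.ofReal (u p.1 * v p.2) := he.mul hd
  obtain ⟨hfst, hsnd⟩ := hπopt
  constructor
  · refine schrod_aux μ ν c hc ε μh u v hu hv hu0 hv0 ?_
    rw [← hfst, hπ, map_fst_withDensity_prod _ _ _ hg]
  · refine schrod_aux ν μ (fun p => c (p.2, p.1)) (hc.comp measurable_swap) ε νh v u hv hu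
      hv0 hu0 ?_
    rw [← hsnd, hπ, map_snd_withDensity_prod _ _ _ hg]
    congr 1
    ext y
    simp only [mul_comm (u _) (v _)]
end
end

section
/- Let {X_i}_{i∈I} be a finite measurable partition of X, set K_i := K restricted to X_i×Y, and suppose π_i = (u_i⊗v_i)·K_i with u_i ∈ L^∞₊(X,μ), v_i ∈ L^∞₊(Y,ν) for each i ∈ I, and π := Σ_{i∈I} π_i. Then KL(π|K) = Σ_{i∈I} [ ∫ log u_i d(P_X π_i) + ∫ log v_i d(P_Y π_i) ] − π(X×Y) + K(X×Y), and all the integrals are finite. -/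
open MeasureTheory ENNReal Filter Topology

noncomputable section

/-! On the block `Xᵢ × Y` the plan `π` has density `uᵢ ⊗ vᵢ` with respect to `K`, and
`φ(ab) = ab log a + ab log b - ab + 1` for all reals (using `log 0 = 0`). Integrating over the
block, the first two terms become `∫ log uᵢ d(P_X πᵢ)` and `∫ log vᵢ d(P_Y πᵢ)`, the third is
`-πᵢ(X × Y)` and the last `K(Xᵢ × Y)`; summing over the partition gives the formula. Everything
is integrable because `K` is finite (`c ≥ 0`, `ε > 0`) and `s log s` is bounded on bounded
intervals. -/

open Set Function InformationTheory

lemma phi_eq_klFun : phi = klFun := by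
  ext s
  rw [phi, klFun_apply]
  ring

lemma phi_nonneg {s : ℝ} (hs : 0 ≤ s) : 0 ≤ phi s := phi_eq_klFun ▸ klFun_nonneg hs

lemma phi_mul (a b : ℝ) :
    phi (a * b) = a * b * Real.log a + a * b * Real.log b - a * b + 1 := by
  rcases eq_or_ne a 0 with rfl | ha
  · simp [phi]
  rcases eq_or_ne b 0 with rfl | hb
  · simp [phi]
  rw [phi, Real.log_mul ha hb]
  ring

lemma KL_withDensity {Z : Type*} [MeasurableSpace Z] (σ : Measure Z) [SigmaFinite σ]
    {f : Z → ℝ≥0∞} (hf : Measurable f) :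
    KL (σ.withDensity f) σ = ∫⁻ z, ENNReal.ofReal (phi (f z).toReal) ∂σ := by
  rw [KL, if_pos (withDensity_absolutelyContinuous σ f)]
  refine lintegral_congr_ae ?_
  filter_upwards [Measure.rnDeriv_withDensity σ hf] with z hz
  rw [hz]

lemma withDensity_finset_sum {α ι : Type*} [MeasurableSpace α] [Fintype ι] (μ : Measure α)
    {f : ι → α → ℝ≥0∞} (hf : ∀ i, Measurable (f i)) :
    μ.withDensity (fun a => ∑ i, f i a) = ∑ i, μ.withDensity (f i) := by
  rw [← Measure.sum_fintype, ← withDensity_tsum hf, tsum_fintype, Finset.sum_fn]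

lemma lintegral_comp_sum_indicator {α ι M : Type*} [MeasurableSpace α] [Fintype ι]
    [AddCommMonoid M] {μ : Measure α} {S : ι → Set α} (hSm : ∀ i, MeasurableSet (S i))
    (hSd : Pairwise (Disjoint on S)) (hSu : ⋃ i, S i = univ) (f : ι → α → M) (h : M → ℝ≥0∞) :
    ∫⁻ a, h (∑ i, (S i).indicator (f i) a) ∂μ = ∑ i, ∫⁻ a, h (f i a) ∂μ.restrict (S i) := by
  rw [← setLIntegral_univ, ← hSu, lintegral_iUnion hSm hSd, tsum_fintype]
  refine Finset.sum_congr rfl fun i _ => setLIntegral_congr_fun (hSm i) fun a ha => ?_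
  rw [Finset.sum_eq_single_of_mem i (Finset.mem_univ i)
    fun j _ hji => indicator_of_notMem ((hSd hji).notMem_of_mem_right ha) _, indicator_of_mem ha]

lemma KL_sum_withDensity_restrict {α ι : Type*} [MeasurableSpace α] [Fintype ι]
    (K : Measure α) [SigmaFinite K] {S : ι → Set α} (hSm : ∀ i, MeasurableSet (S i))
    (hSd : Pairwise (Disjoint on S)) (hSu : ⋃ i, S i = univ) {f : ι → α → ℝ≥0∞}
    (hf : ∀ i, Measurable (f i)) :
    KL (∑ i, (K.restrict (S i)).withDensity (f i)) K =
      ∑ i, ∫⁻ a, ENNReal.ofReal (phi (f i a).toReal) ∂K.restrict (S i) := by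
  simp_rw [← withDensity_indicator (hSm _)]
  rw [← withDensity_finset_sum K fun i => (hf i).indicator (hSm i),
    KL_withDensity K (Finset.measurable_sum _ fun i _ => (hf i).indicator (hSm i))]
  exact lintegral_comp_sum_indicator hSm hSd hSu f fun x => ENNReal.ofReal (phi x.toReal)

lemma isFiniteMeasure_Kmeas {X Y : Type*} [MeasurableSpace X] [MeasurableSpace Y]
    {μ : Measure X} {ν : Measure Y} [IsFiniteMeasure μ] [IsFiniteMeasure ν] {c : X × Y → ℝ}
    {ε : ℝ} (hc0 : ∀ p, 0 ≤ c p) (hε : 0 < ε) : IsFiniteMeasure (Kmeas μ ν c ε) := by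
  refine isFiniteMeasure_withDensity_ofReal (HasFiniteIntegral.of_bounded (C := 1) ?_)
  refine ae_of_all _ fun p => ?_
  rw [Real.norm_of_nonneg (Real.exp_nonneg _), Real.exp_le_one_iff]
  exact div_nonpos_of_nonpos_of_nonneg (neg_nonpos.2 (hc0 p)) hε.le

section Density

variable {α β : Type*} [MeasurableSpace α] [MeasurableSpace β] {σ : Measure α} {g : α → ℝ}
  {φ : α → β} {h : β → ℝ}

lemma integrable_map_withDensity_ofReal_iff (hg : Measurable g) (hg0 : 0 ≤ᵐ[σ] g)
    (hφ : Measurable φ) (hh : Measurable h) :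
    Integrable h ((σ.withDensity fun a => ENNReal.ofReal (g a)).map φ) ↔
      Integrable (fun a => g a * h (φ a)) σ := by
  rw [integrable_map_measure hh.aestronglyMeasurable hφ.aemeasurable,
    integrable_withDensity_iff_integrable_smul' hg.ennreal_ofReal
      (ae_of_all _ fun _ => ofReal_lt_top)]
  refine integrable_congr ?_
  filter_upwards [hg0] with a ha
  simp [ENNReal.toReal_ofReal ha]

lemma integral_map_withDensity_ofReal (hg : Measurable g) (hg0 : 0 ≤ᵐ[σ] g)
    (hφ : Measurable φ) (hh : Measurable h) :
    ∫ b, h b ∂((σ.withDensity fun a => ENNReal.ofReal (g a)).map φ) = ∫ a, g a * h (φ a) ∂σ := by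
  rw [integral_map hφ.aemeasurable hh.aestronglyMeasurable,
    integral_withDensity_eq_integral_toReal_smul hg.ennreal_ofReal
      (ae_of_all _ fun _ => ofReal_lt_top)]
  refine integral_congr_ae ?_
  filter_upwards [hg0] with a ha
  simp [ENNReal.toReal_ofReal ha]

lemma withDensity_ofReal_apply_univ (hg : Integrable g σ) (hg0 : 0 ≤ᵐ[σ] g) :
    (σ.withDensity fun a => ENNReal.ofReal (g a)) univ = ENNReal.ofReal (∫ a, g a ∂σ) := by
  rw [withDensity_apply _ MeasurableSet.univ, Measure.restrict_univ,
    ofReal_integral_eq_lintegral_ofReal hg hg0]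

end Density

lemma integrable_mul_mul_log_of_bounded {Z : Type*} [MeasurableSpace Z] {σ : Measure Z}
    [IsFiniteMeasure σ] {f g : Z → ℝ} {Cf Cg : ℝ} (hf : Measurable f) (hg : Measurable g)
    (hf_bdd : ∀ᵐ z ∂σ, f z ∈ Icc 0 Cf) (hg_bdd : ∀ᵐ z ∂σ, |g z| ≤ Cg) :
    Integrable (fun z => f z * g z * Real.log (f z)) σ := by
  obtain ⟨C, hC⟩ := isCompact_Icc.exists_bound_of_continuousOn
    (Real.continuous_mul_log.continuousOn (s := Icc 0 Cf))
  refine Integrable.of_bound ((hf.mul hg).mul hf.log).aestronglyMeasurable (C * Cg) ?_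
  filter_upwards [hf_bdd, hg_bdd] with z hfz hgz
  calc ‖f z * g z * Real.log (f z)‖ = ‖f z * Real.log (f z)‖ * |g z| := by
        simp only [norm_mul, Real.norm_eq_abs]; ring
    _ ≤ C * Cg := mul_le_mul (hC _ hfz) hgz (abs_nonneg _) ((norm_nonneg _).trans (hC _ hfz))

section ProductDensity

variable {X Y : Type*} [MeasurableSpace X] [MeasurableSpace Y] {u : X → ℝ} {v : Y → ℝ}

lemma measurable_prod_mul (hu : Measurable u) (hv : Measurable v) :
    Measurable fun p : X × Y => u p.1 * v p.2 :=
  (hu.comp measurable_fst).mul (hv.comp measurable_snd)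

lemma measurable_prodDensity (hu : Measurable u) (hv : Measurable v) :
    Measurable (prodDensity u v) :=
  (measurable_prod_mul hu hv).ennreal_ofReal

lemma LinftyPlus.ae_fst_mem_Icc {μ : Measure X} {ν : Measure Y} {σ : Measure (X × Y)}
    (hu : LinftyPlus μ u) (hσ : σ ≪ μ.prod ν) : ∃ C, ∀ᵐ p ∂σ, u p.1 ∈ Icc 0 C := by
  obtain ⟨-, h0, C, hC⟩ := hu
  exact ⟨C, hσ.ae_le (Measure.quasiMeasurePreserving_fst.ae (h0.and hC))⟩

lemma LinftyPlus.ae_snd_mem_Icc {μ : Measure X} {ν : Measure Y} {σ : Measure (X × Y)}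
    (hv : LinftyPlus ν v) (hσ : σ ≪ μ.prod ν) : ∃ C, ∀ᵐ p ∂σ, v p.2 ∈ Icc 0 C := by
  obtain ⟨-, h0, C, hC⟩ := hv
  exact ⟨C, hσ.ae_le (Measure.quasiMeasurePreserving_snd.ae (h0.and hC))⟩

lemma ae_prod_mul_nonneg {σ : Measure (X × Y)} (hu : ∀ᵐ p ∂σ, 0 ≤ u p.1)
    (hv : ∀ᵐ p ∂σ, 0 ≤ v p.2) : 0 ≤ᵐ[σ] fun p => u p.1 * v p.2 :=
  (hu.and hv).mono fun _ h => mul_nonneg h.1 h.2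

lemma integral_phi_prod_mul_nonneg {σ : Measure (X × Y)} (hu : ∀ᵐ p ∂σ, 0 ≤ u p.1)
    (hv : ∀ᵐ p ∂σ, 0 ≤ v p.2) : 0 ≤ ∫ p, phi (u p.1 * v p.2) ∂σ :=
  integral_nonneg_of_ae ((ae_prod_mul_nonneg hu hv).mono fun _ => phi_nonneg)

variable {σ : Measure (X × Y)} [IsFiniteMeasure σ] {Cu Cv : ℝ} (hu : Measurable u)
  (hv : Measurable v) (hu_bdd : ∀ᵐ p ∂σ, u p.1 ∈ Icc 0 Cu) (hv_bdd : ∀ᵐ p ∂σ, v p.2 ∈ Icc 0 Cv)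
include hu hv hu_bdd hv_bdd

lemma integrable_prod_mul_log_fst : Integrable (fun p => u p.1 * v p.2 * Real.log (u p.1)) σ :=
  integrable_mul_mul_log_of_bounded (hu.comp measurable_fst) (hv.comp measurable_snd) hu_bdd
    (hv_bdd.mono fun _ h => (abs_of_nonneg h.1).trans_le h.2)

lemma integrable_prod_mul_log_snd : Integrable (fun p => u p.1 * v p.2 * Real.log (v p.2)) σ :=
  (integrable_mul_mul_log_of_bounded (hv.comp measurable_snd) (hu.comp measurable_fst) hv_bdd
    (hu_bdd.mono fun _ h => (abs_of_nonneg h.1).trans_le h.2)).congr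
    (ae_of_all _ fun p => by simp only [comp_apply]; ring)

lemma integrable_prod_mul : Integrable (fun p => u p.1 * v p.2) σ := by
  refine Integrable.of_bound (measurable_prod_mul hu hv).aestronglyMeasurable (Cu * Cv) ?_
  filter_upwards [hu_bdd, hv_bdd] with p hup hvp
  rw [Real.norm_of_nonneg (mul_nonneg hup.1 hvp.1)]
  exact mul_le_mul hup.2 hvp.2 hvp.1 (hup.1.trans hup.2)

lemma isFiniteMeasure_withDensity_prodDensity :
    IsFiniteMeasure (σ.withDensity (prodDensity u v)) :=
  isFiniteMeasure_withDensity_ofReal (integrable_prod_mul hu hv hu_bdd hv_bdd).2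

lemma integrable_phi_prod_mul : Integrable (fun p => phi (u p.1 * v p.2)) σ := by
  simp_rw [phi_mul]
  exact (((integrable_prod_mul_log_fst hu hv hu_bdd hv_bdd).add
    (integrable_prod_mul_log_snd hu hv hu_bdd hv_bdd)).sub
    (integrable_prod_mul hu hv hu_bdd hv_bdd)).add (integrable_const 1)

lemma integrable_log_map_fst_withDensity_prodDensity :
    Integrable (fun x => Real.log (u x)) ((σ.withDensity (prodDensity u v)).map Prod.fst) :=
  (integrable_map_withDensity_ofReal_iff (measurable_prod_mul hu hv)
    (ae_prod_mul_nonneg (hu_bdd.mono fun _ h => h.1) (hv_bdd.mono fun _ h => h.1))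
    measurable_fst hu.log).2
    (integrable_prod_mul_log_fst hu hv hu_bdd hv_bdd)

lemma integrable_log_map_snd_withDensity_prodDensity :
    Integrable (fun y => Real.log (v y)) ((σ.withDensity (prodDensity u v)).map Prod.snd) :=
  (integrable_map_withDensity_ofReal_iff (measurable_prod_mul hu hv)
    (ae_prod_mul_nonneg (hu_bdd.mono fun _ h => h.1) (hv_bdd.mono fun _ h => h.1))
    measurable_snd hv.log).2
    (integrable_prod_mul_log_snd hu hv hu_bdd hv_bdd)

lemma lintegral_phi_prodDensity :
    ∫⁻ p, ENNReal.ofReal (phi (prodDensity u v p).toReal) ∂σ =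
      ENNReal.ofReal (∫ p, phi (u p.1 * v p.2) ∂σ) := by
  have hg0 := ae_prod_mul_nonneg (hu_bdd.mono fun _ h => h.1) (hv_bdd.mono fun _ h => h.1)
  rw [ofReal_integral_eq_lintegral_ofReal (integrable_phi_prod_mul hu hv hu_bdd hv_bdd)
    (hg0.mono fun _ h => phi_nonneg h)]
  refine lintegral_congr_ae ?_
  filter_upwards [hg0] with p hp
  rw [prodDensity, ENNReal.toReal_ofReal hp]

lemma integral_phi_prod_mul :
    ∫ p, phi (u p.1 * v p.2) ∂σ =
      ∫ x, Real.log (u x) ∂((σ.withDensity (prodDensity u v)).map Prod.fst) +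
        ∫ y, Real.log (v y) ∂((σ.withDensity (prodDensity u v)).map Prod.snd) -
        ((σ.withDensity (prodDensity u v)) univ).toReal + (σ univ).toReal := by
  have hgm := measurable_prod_mul hu hv
  have hg0 := ae_prod_mul_nonneg (hu_bdd.mono fun _ h => h.1) (hv_bdd.mono fun _ h => h.1)
  have hg := integrable_prod_mul hu hv hu_bdd hv_bdd
  have hA := integrable_prod_mul_log_fst hu hv hu_bdd hv_bdd
  have hB := integrable_prod_mul_log_snd hu hv hu_bdd hv_bdd
  unfold prodDensity
  rw [integral_map_withDensity_ofReal hgm hg0 measurable_fst hu.log,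
    integral_map_withDensity_ofReal hgm hg0 measurable_snd hv.log,
    withDensity_ofReal_apply_univ hg hg0, ENNReal.toReal_ofReal (integral_nonneg_of_ae hg0)]
  have hAB : Integrable (fun p => u p.1 * v p.2 * Real.log (u p.1) +
      u p.1 * v p.2 * Real.log (v p.2)) σ := hA.add hB
  have hABg : Integrable (fun p => u p.1 * v p.2 * Real.log (u p.1) +
      u p.1 * v p.2 * Real.log (v p.2) - u p.1 * v p.2) σ := hAB.sub hg
  simp_rw [phi_mul]
  rw [integral_add hABg (integrable_const 1), integral_sub hAB hg, integral_add hA hB,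
    integral_const, smul_eq_mul, mul_one, measureReal_def]

end ProductDensity

theorem kl_scaling_decomposition_general
    {X Y : Type*} [MeasurableSpace X] [MeasurableSpace Y]
    (μ : Measure X) (ν : Measure Y) [IsProbabilityMeasure μ] [IsProbabilityMeasure ν]
    (c : X × Y → ℝ) (hc0 : ∀ p, 0 ≤ c p) (ε : ℝ) (hε : 0 < ε)
    {ι : Type*} [Fintype ι]
    (Xc : ι → Set X) (hXm : ∀ i, MeasurableSet (Xc i))
    (hXd : ∀ i j, i ≠ j → Disjoint (Xc i) (Xc j)) (hXu : (⋃ i, Xc i) = Set.univ)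
    (u : ι → X → ℝ) (v : ι → Y → ℝ)
    (hu : ∀ i, LinftyPlus μ (u i)) (hv : ∀ i, LinftyPlus ν (v i))
    (πi : ι → Measure (X × Y))
    (hπi : ∀ i, πi i =
      ((Kmeas μ ν c ε).restrict (Xc i ×ˢ Set.univ)).withDensity (prodDensity (u i) (v i)))
    (π : Measure (X × Y)) (hπ : π = ∑ i, πi i) :
    (∀ i, Integrable (fun x => Real.log (u i x)) ((πi i).map Prod.fst)) ∧
    (∀ i, Integrable (fun y => Real.log (v i y)) ((πi i).map Prod.snd)) ∧
    KL π (Kmeas μ ν c ε) ≠ ⊤ ∧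
    (KL π (Kmeas μ ν c ε)).toReal =
      (∑ i, ((∫ x, Real.log (u i x) ∂((πi i).map Prod.fst)) +
             (∫ y, Real.log (v i y) ∂((πi i).map Prod.snd))))
        - (π Set.univ).toReal + ((Kmeas μ ν c ε) Set.univ).toReal := by
  have : IsFiniteMeasure (Kmeas μ ν c ε) := isFiniteMeasure_Kmeas hc0 hε
  set K := Kmeas μ ν c ε
  set S : ι → Set (X × Y) := fun i => Xc i ×ˢ univ
  have hSm : ∀ i, MeasurableSet (S i) := fun i => (hXm i).prod .univ
  have hSd : Pairwise (Disjoint on S) := fun i j hij => disjoint_prod.2 (.inl (hXd i j hij))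
  have hSu : ⋃ i, S i = univ := by simp only [S, ← iUnion_prod_const, hXu, univ_prod_univ]
  have hKS : ∀ i, K.restrict (S i) ≪ μ.prod ν := fun i =>
    (Measure.absolutelyContinuous_of_le Measure.restrict_le_self).trans
      (withDensity_absolutelyContinuous _ _)
  choose Cu hCu using fun i => (hu i).ae_fst_mem_Icc (hKS i)
  choose Cv hCv using fun i => (hv i).ae_snd_mem_Icc (hKS i)
  have hphi0 : ∀ i, 0 ≤ ∫ p, phi (u i p.1 * v i p.2) ∂K.restrict (S i) := fun i =>
    integral_phi_prod_mul_nonneg ((hCu i).mono fun _ h => h.1) ((hCv i).mono fun _ h => h.1)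
  have hKL : KL π K = ENNReal.ofReal (∑ i, ∫ p, phi (u i p.1 * v i p.2) ∂K.restrict (S i)) := by
    rw [hπ, Finset.sum_congr rfl fun i _ => hπi i, KL_sum_withDensity_restrict K hSm hSd hSu
      fun i => measurable_prodDensity (hu i).1 (hv i).1,
      ENNReal.ofReal_sum_of_nonneg fun i _ => hphi0 i]
    exact Finset.sum_congr rfl fun i _ =>
      lintegral_phi_prodDensity (hu i).1 (hv i).1 (hCu i) (hCv i)
  have hblock : ∀ i, ∫ p, phi (u i p.1 * v i p.2) ∂K.restrict (S i) =
      ∫ x, Real.log (u i x) ∂((πi i).map Prod.fst) + ∫ y, Real.log (v i y) ∂((πi i).map Prod.snd)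
        - (πi i univ).toReal + (K (S i)).toReal := fun i => by
    rw [hπi i, integral_phi_prod_mul (hu i).1 (hv i).1 (hCu i) (hCv i), Measure.restrict_apply_univ]
  have (i : ι) : IsFiniteMeasure (πi i) :=
    hπi i ▸ isFiniteMeasure_withDensity_prodDensity (hu i).1 (hv i).1 (hCu i) (hCv i)
  have hKuniv : (K univ).toReal = ∑ i, (K (S i)).toReal := by
    simpa only [hSu, measureReal_def] using measureReal_iUnion_fintype (μ := K) hSd hSm
  refine ⟨fun i => ?_, fun i => ?_, hKL ▸ ENNReal.ofReal_ne_top, ?_⟩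
  · rw [hπi i]
    exact integrable_log_map_fst_withDensity_prodDensity (hu i).1 (hv i).1 (hCu i) (hCv i)
  · rw [hπi i]
    exact integrable_log_map_snd_withDensity_prodDensity (hu i).1 (hv i).1 (hCu i) (hCv i)
  rw [hKL, ENNReal.toReal_ofReal (Finset.sum_nonneg fun i _ => hphi0 i),
    Finset.sum_congr rfl fun i _ => hblock i, Finset.sum_add_distrib, Finset.sum_sub_distrib,
    hKuniv, hπ, Measure.finsetSum_apply, ENNReal.toReal_sum fun i _ => measure_ne_top _ _]

/-- Lemma 3.3: decomposition of `KL(π|K)` for a plan that is a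
sum of scaled kernels over a finite partition of `X`:
`KL(π|K) = Σᵢ [∫ log uᵢ d(P_X πᵢ) + ∫ log vᵢ d(P_Y πᵢ)] − π(X×Y) + K(X×Y)`,
with all integrals finite. -/
theorem kl_scaling_decomposition
    {X Y : Type*} [MetricSpace X] [CompactSpace X] [MeasurableSpace X] [BorelSpace X]
    [MetricSpace Y] [CompactSpace Y] [MeasurableSpace Y] [BorelSpace Y]
    (μ : Measure X) (ν : Measure Y) [IsProbabilityMeasure μ] [IsProbabilityMeasure ν]
    (c : X × Y → ℝ) (hc : Measurable c) (cmax : ℝ)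
    (hc0 : ∀ p, 0 ≤ c p) (hcmax : ∀ p, c p ≤ cmax)
    (ε : ℝ) (hε : 0 < ε)
    {ι : Type*} [Fintype ι]
    (Xc : ι → Set X) (hXm : ∀ i, MeasurableSet (Xc i))
    (hXd : ∀ i j, i ≠ j → Disjoint (Xc i) (Xc j)) (hXu : (⋃ i, Xc i) = Set.univ)
    (u : ι → X → ℝ) (v : ι → Y → ℝ)
    (hu : ∀ i, LinftyPlus μ (u i)) (hv : ∀ i, LinftyPlus ν (v i))
    (πi : ι → Measure (X × Y))
    (hπi : ∀ i, πi i =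
      ((Kmeas μ ν c ε).restrict (Xc i ×ˢ Set.univ)).withDensity (prodDensity (u i) (v i)))
    (π : Measure (X × Y)) (hπ : π = ∑ i, πi i) :
    (∀ i, Integrable (fun x => Real.log (u i x)) ((πi i).map Prod.fst)) ∧
    (∀ i, Integrable (fun y => Real.log (v i y)) ((πi i).map Prod.snd)) ∧
    KL π (Kmeas μ ν c ε) ≠ ⊤ ∧
    (KL π (Kmeas μ ν c ε)).toReal =
      (∑ i, ((∫ x, Real.log (u i x) ∂((πi i).map Prod.fst)) +
             (∫ y, Real.log (v i y) ∂((πi i).map Prod.snd))))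
        - (π Set.univ).toReal + ((Kmeas μ ν c ε) Set.univ).toReal :=
  kl_scaling_decomposition_general μ ν c hc0 ε hε Xc hXm hXd hXu u v hu hv πi hπi π hπ
end
end

section
/- Let X_J ⊂ X be measurable with μ(X_J) > 0, set μ_J := μ restricted to X_J, let ν_J ∈ M₊(Y) satisfy ν_J ≤ ν and ‖ν_J‖ = ‖μ_J‖, let u ∈ L^∞₊(X,μ), v ∈ L^∞₊(Y,ν) be such that π := (u⊗v)·K ∈ Π(μ_J, ν_J), let X_i ⊂ X_J be measurable with μ(X_i) > 0, and set ν_i := P_Y(π restricted to X_i×Y). Then for μ-a.e. x ∈ X_i and ν-a.e. y ∈ Y: (dν_i/dν(y))·exp(−‖c‖_∞/ε)/μ(X_i) ≤ u(x)·v(y) ≤ exp(2‖c‖_∞/ε)/μ(X_i). -/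
open MeasureTheory ENNReal Filter Topology

noncomputable section

/-! Write `π = k · (u ⊗ v) · (μ ⊗ ν)` with `κ := exp(-cmax/ε) ≤ k ≤ 1`. On `X_J` the first marginal
condition reads `∫ k(x, ·) u(x) v dν = 1`, which pins `u(x) · ∫ v dν` into `[1, κ⁻¹]`; hence
`κ u(x) ≤ u(x')` for a.e. `x, x' ∈ X_J`. Integrating over `x' ∈ X_i`, the density
`dν_i/dν (y) = ∫_{X_i} k(·, y) u v(y) dμ` lies between `κ² u(x) v(y) μ(X_i)` and
`κ⁻¹ u(x) v(y) μ(X_i)`, and it is at most `1` because `ν_i ≤ ν_J ≤ ν`; the lower sandwich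
bound against `1` gives the upper estimate, the upper one the lower estimate. -/

namespace MeasureTheory.Measure

variable {X Y : Type*} [MeasurableSpace X] [MeasurableSpace Y] (μ : Measure X) (ν : Measure Y)

theorem map_fst_prod_withDensity [SFinite μ] [SFinite ν] {f : X × Y → ℝ≥0∞} (hf : Measurable f) :
    ((μ.prod ν).withDensity f).map Prod.fst = μ.withDensity fun x => ∫⁻ y, f (x, y) ∂ν := by
  ext s hs
  rw [map_apply measurable_fst hs, withDensity_apply _ (measurable_fst hs), withDensity_apply _ hs,
    ← Set.prod_univ, ← prod_restrict, restrict_univ,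
    lintegral_prod _ hf.aemeasurable]

theorem map_snd_prod_withDensity [SFinite μ] [SFinite ν] {f : X × Y → ℝ≥0∞} (hf : Measurable f) :
    ((μ.prod ν).withDensity f).map Prod.snd = ν.withDensity fun y => ∫⁻ x, f (x, y) ∂μ := by
  ext s hs
  rw [map_apply measurable_snd hs, withDensity_apply _ (measurable_snd hs), withDensity_apply _ hs,
    ← Set.univ_prod, ← prod_restrict, restrict_univ,
    lintegral_prod_symm _ hf.aemeasurable]

theorem map_snd_restrict_prod_withDensity [SFinite μ] [SFinite ν] {f : X × Y → ℝ≥0∞}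
    (hf : Measurable f) {s : Set X} (hs : MeasurableSet s) :
    (((μ.prod ν).withDensity f).restrict (s ×ˢ Set.univ)).map Prod.snd =
      ν.withDensity fun y => ∫⁻ x in s, f (x, y) ∂μ := by
  rw [restrict_withDensity (hs.prod MeasurableSet.univ), ← prod_restrict, restrict_univ,
    map_snd_prod_withDensity _ _ hf]

theorem ae_restrict_lintegral_eq_one_of_map_fst_eq [SigmaFinite μ] [SFinite ν]
    {f : X × Y → ℝ≥0∞} (hf : Measurable f) {s : Set X} (hs : MeasurableSet s)
    (h : ((μ.prod ν).withDensity f).map Prod.fst = μ.restrict s) :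
    ∀ᵐ x ∂μ.restrict s, ∫⁻ y, f (x, y) ∂ν = 1 := by
  rw [map_fst_prod_withDensity μ ν hf, ← withDensity_indicator_one hs,
    withDensity_eq_iff_of_sigmaFinite hf.lintegral_prod_right'.aemeasurable
      (measurable_one.indicator hs).aemeasurable] at h
  filter_upwards [ae_restrict_of_ae h, ae_restrict_mem hs] with x hx hxs
  rw [hx, Set.indicator_of_mem hxs, Pi.one_apply]

theorem withDensity_withDensity_prodDensity {k : X × Y → ℝ≥0∞} (hk : Measurable k)
    {u : X → ℝ} {v : Y → ℝ} (hu : Measurable u) (hv : Measurable v)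
    (hu0 : ∀ᵐ x ∂μ, 0 ≤ u x) (hv0 : ∀ᵐ y ∂ν, 0 ≤ v y) :
    ((μ.prod ν).withDensity k).withDensity (prodDensity u v) =
      (μ.prod ν).withDensity fun p => k p * (ENNReal.ofReal (u p.1) * ENNReal.ofReal (v p.2)) := by
  have huv : Measurable (prodDensity u v) :=
    ((hu.comp measurable_fst).mul (hv.comp measurable_snd)).ennreal_ofReal
  rw [← withDensity_mul _ hk huv]
  refine withDensity_congr_ae ?_
  filter_upwards [quasiMeasurePreserving_fst.ae hu0, quasiMeasurePreserving_snd.ae hv0]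
    with p hup hvp
  simp only [Pi.mul_apply, prodDensity, ENNReal.ofReal_mul hup]

end MeasureTheory.Measure

section Scaling

variable {X Y : Type*} [MeasurableSpace X] [MeasurableSpace Y] {ν : Measure Y} {κ : ℝ≥0∞}

theorem ENNReal.mul_le_of_one_le_mul_of_mul_mul_le_one {p q a : ℝ≥0∞} (hp : 1 ≤ p * a)
    (hq : κ * (q * a) ≤ 1) : κ * q ≤ p :=
  calc κ * q ≤ κ * q * (p * a) := le_mul_of_one_le_right' hp
    _ = p * (κ * (q * a)) := by ring
    _ ≤ p := mul_le_of_le_one_right' hq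

theorem mul_lintegral_bounds_of_lintegral_eq_one {k V : Y → ℝ≥0∞} {p : ℝ≥0∞}
    (hκ : ∀ y, κ ≤ k y) (hk : ∀ y, k y ≤ 1) (hV : Measurable V)
    (h : ∫⁻ y, k y * (p * V y) ∂ν = 1) :
    1 ≤ p * ∫⁻ y, V y ∂ν ∧ κ * (p * ∫⁻ y, V y ∂ν) ≤ 1 := by
  rw [← lintegral_const_mul p hV, ← h]
  constructor
  · exact lintegral_mono fun y => mul_le_of_le_one_left' (hk y)
  · calc κ * ∫⁻ y, p * V y ∂ν ≤ ∫⁻ y, κ * (p * V y) ∂ν := lintegral_const_mul_le _ _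
      _ ≤ ∫⁻ y, k y * (p * V y) ∂ν := lintegral_mono fun y => by gcongr; exact hκ y

theorem ae_ae_mul_le_of_lintegral_eq_one {ρ : Measure X} {k : X × Y → ℝ≥0∞}
    (hκ : ∀ p, κ ≤ k p) (hk : ∀ p, k p ≤ 1) {U : X → ℝ≥0∞} {V : Y → ℝ≥0∞} (hV : Measurable V)
    (hrow : ∀ᵐ x ∂ρ, ∫⁻ y, k (x, y) * (U x * V y) ∂ν = 1) :
    ∀ᵐ x ∂ρ, ∀ᵐ x' ∂ρ, κ * U x ≤ U x' ∧ κ * U x' ≤ U x := by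
  have hbounds := hrow.mono fun x hx =>
    mul_lintegral_bounds_of_lintegral_eq_one (fun y => hκ (x, y)) (fun y => hk (x, y)) hV hx
  filter_upwards [hbounds] with x hx
  filter_upwards [hbounds] with x' hx'
  exact ⟨ENNReal.mul_le_of_one_le_mul_of_mul_mul_le_one hx'.1 hx.2,
    ENNReal.mul_le_of_one_le_mul_of_mul_mul_le_one hx.1 hx'.2⟩

theorem lintegral_mul_bounds_of_ae_comparable {ρ : Measure X} {k U : X → ℝ≥0∞} {x : X} {w : ℝ≥0∞}
    (hκ : ∀ x', κ ≤ k x') (hk : ∀ x', k x' ≤ 1)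
    (hU : ∀ᵐ x' ∂ρ, κ * U x ≤ U x' ∧ κ * U x' ≤ U x) :
    κ ^ 2 * (U x * w) * ρ Set.univ ≤ ∫⁻ x', k x' * (U x' * w) ∂ρ ∧
      κ * ∫⁻ x', k x' * (U x' * w) ∂ρ ≤ U x * w * ρ Set.univ := by
  constructor
  · rw [← lintegral_const]
    refine lintegral_mono_ae (hU.mono fun x' hx' => ?_)
    calc κ ^ 2 * (U x * w) = κ * (κ * U x * w) := by ring
      _ ≤ k x' * (U x' * w) := by gcongr; exacts [hκ x', hx'.1]
  · rw [← lintegral_const]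
    refine (lintegral_const_mul_le _ _).trans (lintegral_mono_ae (hU.mono fun x' hx' => ?_))
    calc κ * (k x' * (U x' * w)) ≤ κ * (1 * (U x' * w)) := by gcongr; exact hk x'
      _ = κ * U x' * w := by ring
      _ ≤ U x * w := by gcongr; exact hx'.2

end Scaling

theorem toReal_bounds_of_ennreal_bounds {κ : ℝ} (hκ : 0 < κ) {D P M : ℝ≥0∞} (hP : P ≠ ⊤)
    (hM : M ≠ ⊤) (hM0 : M ≠ 0) (hlow : ENNReal.ofReal κ * D ≤ P * M)
    (hup : ENNReal.ofReal κ ^ 2 * P * M ≤ 1) :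
    D.toReal * κ / M.toReal ≤ P.toReal ∧ P.toReal ≤ κ⁻¹ ^ 2 / M.toReal := by
  have hMpos : 0 < M.toReal := ENNReal.toReal_pos hM0 hM
  have hlow' := ENNReal.toReal_mono (ENNReal.mul_ne_top hP hM) hlow
  have hup' := ENNReal.toReal_mono ENNReal.one_ne_top hup
  simp only [ENNReal.toReal_mul, ENNReal.toReal_pow, ENNReal.toReal_ofReal hκ.le,
    ENNReal.toReal_one] at hlow' hup'
  constructor
  · rw [div_le_iff₀ hMpos]
    linarith
  · rw [le_div_iff₀ hMpos, inv_pow, ← one_div, le_div_iff₀ (by positivity)]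
    linarith

theorem exp_neg_div_bounds {t cmax ε : ℝ} (ht0 : 0 ≤ t) (ht : t ≤ cmax) (hε : 0 < ε) :
    ENNReal.ofReal (Real.exp (-cmax / ε)) ≤ ENNReal.ofReal (Real.exp (-t / ε)) ∧
      ENNReal.ofReal (Real.exp (-t / ε)) ≤ 1 :=
  ⟨ENNReal.ofReal_le_ofReal <| Real.exp_le_exp.2 <|
      div_le_div_of_nonneg_right (neg_le_neg ht) hε.le,
    ENNReal.ofReal_le_one.2 <| Real.exp_le_one_iff.2 <|
      div_nonpos_of_nonpos_of_nonneg (neg_nonpos.2 ht0) hε.le⟩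

theorem density_abs_bound_general
    {X Y : Type*} [MeasurableSpace X] [MeasurableSpace Y]
    (μ : Measure X) (ν : Measure Y) [IsProbabilityMeasure μ] [IsProbabilityMeasure ν]
    (c : X × Y → ℝ) (hc : Measurable c) (cmax : ℝ)
    (hc0 : ∀ p, 0 ≤ c p) (hcmax : ∀ p, c p ≤ cmax)
    (ε : ℝ) (hε : 0 < ε)
    (XJ : Set X) (hXJ : MeasurableSet XJ)
    (νJ : Measure Y) (hνJle : νJ ≤ ν)
    (u : X → ℝ) (v : Y → ℝ) (hu : LinftyPlus μ u) (hv : LinftyPlus ν v)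
    (π : Measure (X × Y)) (hπdef : π = (Kmeas μ ν c ε).withDensity (prodDensity u v))
    (hplan : π ∈ Coupling (μ.restrict XJ) νJ)
    (Xi : Set X) (hXi : MeasurableSet Xi) (hXisub : Xi ⊆ XJ) (hXipos : 0 < μ Xi)
    (νi : Measure Y) (hνi : νi = (π.restrict (Xi ×ˢ Set.univ)).map Prod.snd) :
    ∀ᵐ x ∂μ.restrict Xi, ∀ᵐ y ∂ν,
      (νi.rnDeriv ν y).toReal * Real.exp (-cmax / ε) / (μ Xi).toReal ≤ u x * v y ∧
      u x * v y ≤ Real.exp (2 * cmax / ε) / (μ Xi).toReal := by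
  obtain ⟨hum, hu0, -⟩ := hu
  obtain ⟨hvm, hv0, -⟩ := hv
  set κ : ℝ≥0∞ := ENNReal.ofReal (Real.exp (-cmax / ε))
  set k : X × Y → ℝ≥0∞ := fun p => ENNReal.ofReal (Real.exp (-c p / ε))
  set U : X → ℝ≥0∞ := fun x => ENNReal.ofReal (u x)
  set V : Y → ℝ≥0∞ := fun y => ENNReal.ofReal (v y)
  have hκk : ∀ p, κ ≤ k p := fun p => (exp_neg_div_bounds (hc0 p) (hcmax p) hε).1
  have hk1 : ∀ p, k p ≤ 1 := fun p => (exp_neg_div_bounds (hc0 p) (hcmax p) hε).2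
  have hkm : Measurable k := (hc.neg.div_const ε).exp.ennreal_ofReal
  have hfm : Measurable fun p : X × Y => k p * (U p.1 * V p.2) :=
    hkm.mul ((hum.ennreal_ofReal.comp measurable_fst).mul
      (hvm.ennreal_ofReal.comp measurable_snd))
  have hπ : π = (μ.prod ν).withDensity fun p => k p * (U p.1 * V p.2) :=
    hπdef.trans (Measure.withDensity_withDensity_prodDensity μ ν hkm hum hvm hu0 hv0)
  have hrow : ∀ᵐ x ∂μ.restrict Xi, ∫⁻ y, k (x, y) * (U x * V y) ∂ν = 1 :=
    ae_restrict_of_ae_restrict_of_subset hXisub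
      (Measure.ae_restrict_lintegral_eq_one_of_map_fst_eq μ ν hfm hXJ (hπ ▸ hplan.1))
  have hD : νi.rnDeriv ν =ᵐ[ν] fun y => ∫⁻ x in Xi, k (x, y) * (U x * V y) ∂μ := by
    rw [hνi, hπ, Measure.map_snd_restrict_prod_withDensity μ ν hfm hXi]
    exact Measure.rnDeriv_withDensity ν hfm.lintegral_prod_left'
  have hD1 : νi.rnDeriv ν ≤ᵐ[ν] 1 := Measure.rnDeriv_le_one_of_le <|
    calc νi ≤ π.map Prod.snd := hνi ▸ Measure.map_mono Measure.restrict_le_self measurable_snd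
      _ = νJ := hplan.2
      _ ≤ ν := hνJle
  have hexp : Real.exp (2 * cmax / ε) = (Real.exp (-cmax / ε))⁻¹ ^ 2 := by
    rw [← Real.exp_neg, ← Real.exp_nat_mul]; ring_nf
  filter_upwards [ae_ae_mul_le_of_lintegral_eq_one hκk hk1 hvm.ennreal_ofReal hrow,
    ae_restrict_of_ae hu0] with x hUx hux
  filter_upwards [hD, hD1, hv0] with y hDy hD1y hvy
  obtain ⟨hlower, hupper⟩ := lintegral_mul_bounds_of_ae_comparable (w := V y)
    (fun x' => hκk (x', y)) (fun x' => hk1 (x', y)) hUx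
  rw [Measure.restrict_apply_univ, ← hDy] at hlower hupper
  rw [hexp, ← ENNReal.toReal_ofReal (mul_nonneg hux hvy), ENNReal.ofReal_mul hux]
  exact toReal_bounds_of_ennreal_bounds (Real.exp_pos _) (by finiteness) (measure_ne_top μ Xi)
    hXipos.ne' hupper (hlower.trans hD1y)

/-- Lemma 2.9 (iv): local control of the product of scaling
factors of a cell plan on a basic cell `X_i ⊆ X_J`:
`(dνᵢ/dν)(y)·exp(−‖c‖/ε)/μ(Xᵢ) ≤ u(x)·v(y) ≤ exp(2‖c‖/ε)/μ(Xᵢ)`. -/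
theorem density_abs_bound
    {X Y : Type*} [MetricSpace X] [CompactSpace X] [MeasurableSpace X] [BorelSpace X]
    [MetricSpace Y] [CompactSpace Y] [MeasurableSpace Y] [BorelSpace Y]
    (μ : Measure X) (ν : Measure Y) [IsProbabilityMeasure μ] [IsProbabilityMeasure ν]
    (c : X × Y → ℝ) (hc : Measurable c) (cmax : ℝ)
    (hc0 : ∀ p, 0 ≤ c p) (hcmax : ∀ p, c p ≤ cmax)
    (ε : ℝ) (hε : 0 < ε)
    (XJ : Set X) (hXJ : MeasurableSet XJ) (hXJpos : 0 < μ XJ)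
    (νJ : Measure Y) (hνJle : νJ ≤ ν) (hνJmass : νJ Set.univ = μ XJ)
    (u : X → ℝ) (v : Y → ℝ) (hu : LinftyPlus μ u) (hv : LinftyPlus ν v)
    (π : Measure (X × Y)) (hπdef : π = (Kmeas μ ν c ε).withDensity (prodDensity u v))
    (hplan : π ∈ Coupling (μ.restrict XJ) νJ)
    (Xi : Set X) (hXi : MeasurableSet Xi) (hXisub : Xi ⊆ XJ) (hXipos : 0 < μ Xi)
    (νi : Measure Y) (hνi : νi = (π.restrict (Xi ×ˢ Set.univ)).map Prod.snd) :
    ∀ᵐ x ∂μ.restrict Xi, ∀ᵐ y ∂ν,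
      (νi.rnDeriv ν y).toReal * Real.exp (-cmax / ε) / (μ Xi).toReal ≤ u x * v y ∧
      u x * v y ≤ Real.exp (2 * cmax / ε) / (μ Xi).toReal :=
  density_abs_bound_general μ ν c hc cmax hc0 hcmax ε hε XJ hXJ νJ hνJle u v hu hv π hπdef hplan Xi
    hXi hXisub hXipos νi hνi
end
end

section
/- Let X_J ⊂ X be measurable with μ(X_J) > 0, set μ_J := μ restricted to X_J, let ν_J ∈ M₊(Y) satisfy ν_J ≤ ν and ‖ν_J‖ = ‖μ_J‖, let u ∈ L^∞₊(X,μ), v ∈ L^∞₊(Y,ν) be such that π := (u⊗v)·K ∈ Π(μ_J, ν_J), let X_i ⊂ X_J be measurable with μ(X_i) > 0, and set ν_i := P_Y(π restricted to X_i×Y). Then for every ν' ∈ M₊(Y) with ν' ≤ ν_J, one has dν_i/dν(y) ≥ exp(−2‖c‖_∞/ε)·μ(X_i)·dν'/dν(y) for ν-a.e. y ∈ Y. -/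
open MeasureTheory ENNReal Filter Topology

noncomputable section

/-!
Write `π = κ · (g ⊗ h) · (μ ⊗ ν)` with `κ = exp(-c/ε) ∈ [a, 1]`, `a = exp(-cmax/ε)`, `g = u`,
`h = v`, and put `G_A = ∫_A g dμ`, `H = ∫ h dν`. Squeezing `κ` between `a` and `1` squeezes the
`Y`-density `∫_A κ(·, y) g dμ · h y` of `P_Y(π|A × Y)` between `a G_A h y` and `G_A h y`, and
the mass `π(A × Y)` between `a G_A H` and `G_A H`. Hence `dν'/dν ≤ dν_J/dν ≤ G_X h`,
`μ(X_i) = π(X_i × Y) ≤ G_{X_i} H` and `a G_X H ≤ π(X × Y) ≤ 1`, so that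
`a² μ(X_i) dν'/dν ≤ (a G_X H)(a G_{X_i} h) ≤ dν_i/dν`.
-/

open Set

theorem Coupling.apply_prod_univ {X Y : Type*} [MeasurableSpace X] [MeasurableSpace Y]
    {μh : Measure X} {νh : Measure Y} {π : Measure (X × Y)} (hπ : π ∈ Coupling μh νh)
    {A : Set X} (hA : MeasurableSet A) : π (A ×ˢ univ) = μh A := by
  rw [← hπ.1, Measure.map_apply measurable_fst hA, prod_univ]

theorem MeasureTheory.Measure.rnDeriv_le_of_le_withDensity {Z : Type*} [MeasurableSpace Z]
    {ρ ν : Measure Z} [SigmaFinite ν] {f : Z → ℝ≥0∞}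
    (hρ : ρ ≤ ν.withDensity f) : ρ.rnDeriv ν ≤ᵐ[ν] f := by
  refine ae_le_of_forall_setLIntegral_le_of_sigmaFinite (ρ.measurable_rnDeriv ν)
    fun s hs _ ↦ ?_
  calc ∫⁻ z in s, ρ.rnDeriv ν z ∂ν ≤ ρ s := Measure.setLIntegral_rnDeriv_le s
    _ ≤ ν.withDensity f s := hρ s
    _ = ∫⁻ z in s, f z ∂ν := withDensity_apply f hs

theorem ofReal_exp_neg_div_mem_Icc {t tmax ε : ℝ} (ht0 : 0 ≤ t) (htmax : t ≤ tmax)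
    (hε : 0 < ε) :
    ENNReal.ofReal (Real.exp (-t / ε)) ∈ Icc (ENNReal.ofReal (Real.exp (-tmax / ε))) 1 := by
  refine ⟨ENNReal.ofReal_le_ofReal (Real.exp_le_exp.2 ?_), ENNReal.ofReal_le_one.2 ?_⟩
  · exact div_le_div_of_nonneg_right (neg_le_neg htmax) hε.le
  · exact Real.exp_le_one_iff.2 (div_nonpos_of_nonpos_of_nonneg (neg_nonpos.2 ht0) hε.le)

theorem Kmeas_withDensity_prodDensity {X Y : Type*} [MeasurableSpace X] [MeasurableSpace Y]
    {μ : Measure X} {ν : Measure Y} [SFinite ν] {c : X × Y → ℝ} (hc : Measurable c) (ε : ℝ)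
    {u : X → ℝ} {v : Y → ℝ} (hu : Measurable u) (hv : Measurable v)
    (hu0 : ∀ᵐ x ∂μ, 0 ≤ u x) :
    (Kmeas μ ν c ε).withDensity (prodDensity u v) = (μ.prod ν).withDensity fun p =>
      ENNReal.ofReal (Real.exp (-c p / ε))
        * (ENNReal.ofReal (u p.1) * ENNReal.ofReal (v p.2)) := by
  have hk : Measurable fun p : X × Y => ENNReal.ofReal (Real.exp (-c p / ε)) := by fun_prop
  have huv : Measurable (prodDensity u v) := by unfold prodDensity; fun_prop
  rw [Kmeas, ← withDensity_mul _ hk huv]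
  refine withDensity_congr_ae ?_
  filter_upwards [Measure.quasiMeasurePreserving_fst.ae hu0] with p hp
  simp only [Pi.mul_apply, prodDensity, ENNReal.ofReal_mul hp]

section ProductDensity

variable {X Y : Type*} [MeasurableSpace X] {μ : Measure X}
  {κ : X × Y → ℝ≥0∞} {g : X → ℝ≥0∞} {h : Y → ℝ≥0∞} {a : ℝ≥0∞}

theorem le_setLIntegral_mul_prod (hκ : ∀ p, κ p ∈ Icc a 1) (hg : Measurable g)
    (A : Set X) (y : Y) :
    a * ((∫⁻ x in A, g x ∂μ) * h y) ≤ ∫⁻ x in A, κ (x, y) * (g x * h y) ∂μ := by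
  rw [← lintegral_mul_const _ hg, ← lintegral_const_mul _ (hg.mul_const _)]
  exact lintegral_mono fun x ↦ mul_le_mul_left (hκ (x, y)).1 _

theorem setLIntegral_mul_prod_le (hκ : ∀ p, κ p ∈ Icc a 1) (hg : Measurable g)
    (A : Set X) (y : Y) :
    ∫⁻ x in A, κ (x, y) * (g x * h y) ∂μ ≤ (∫⁻ x in A, g x ∂μ) * h y := by
  rw [← lintegral_mul_const _ hg]
  exact lintegral_mono fun x ↦ mul_le_of_le_one_left' (hκ (x, y)).2

variable [MeasurableSpace Y] {ν : Measure Y} [SFinite μ] [SFinite ν]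

theorem withDensity_prod_apply_prod {f : X × Y → ℝ≥0∞}
    (hf : Measurable f) {A : Set X} {B : Set Y} (hA : MeasurableSet A) (hB : MeasurableSet B) :
    (μ.prod ν).withDensity f (A ×ˢ B) = ∫⁻ y in B, ∫⁻ x in A, f (x, y) ∂μ ∂ν := by
  rw [withDensity_apply _ (hA.prod hB), ← Measure.prod_restrict, lintegral_prod_symm' f hf]

theorem map_snd_restrict_prod_univ_withDensity {f : X × Y → ℝ≥0∞}
    (hf : Measurable f) {A : Set X} (hA : MeasurableSet A) :
    (((μ.prod ν).withDensity f).restrict (A ×ˢ univ)).map Prod.snd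
      = ν.withDensity fun y => ∫⁻ x in A, f (x, y) ∂μ := by
  ext s hs
  rw [Measure.map_apply measurable_snd hs, Measure.restrict_apply (measurable_snd hs),
    withDensity_apply _ hs, ← withDensity_prod_apply_prod hf hA hs]
  congr 1
  ext p
  simp [and_comm]

theorem le_withDensity_mul_prod_apply_prod_univ (hκm : Measurable κ) (hκ : ∀ p, κ p ∈ Icc a 1)
    (hg : Measurable g) (hh : Measurable h) {A : Set X} (hA : MeasurableSet A) :
    a * ((∫⁻ x in A, g x ∂μ) * ∫⁻ y, h y ∂ν)
      ≤ (μ.prod ν).withDensity (fun p => κ p * (g p.1 * h p.2)) (A ×ˢ univ) := by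
  have hF : Measurable fun p : X × Y => κ p * (g p.1 * h p.2) := by fun_prop
  rw [withDensity_prod_apply_prod hF hA MeasurableSet.univ, Measure.restrict_univ,
    ← lintegral_const_mul _ hh, ← lintegral_const_mul _ (hh.const_mul _)]
  exact lintegral_mono fun y ↦ le_setLIntegral_mul_prod hκ hg A y

theorem withDensity_mul_prod_apply_prod_univ_le (hκm : Measurable κ) (hκ : ∀ p, κ p ∈ Icc a 1)
    (hg : Measurable g) (hh : Measurable h) {A : Set X} (hA : MeasurableSet A) :
    (μ.prod ν).withDensity (fun p => κ p * (g p.1 * h p.2)) (A ×ˢ univ)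
      ≤ (∫⁻ x in A, g x ∂μ) * ∫⁻ y, h y ∂ν := by
  have hF : Measurable fun p : X × Y => κ p * (g p.1 * h p.2) := by fun_prop
  rw [withDensity_prod_apply_prod hF hA MeasurableSet.univ, Measure.restrict_univ,
    ← lintegral_const_mul _ hh]
  exact lintegral_mono fun y ↦ setLIntegral_mul_prod_le hκ hg A y

theorem mul_rnDeriv_le_rnDeriv_map_snd_restrict [SigmaFinite ν] (hκm : Measurable κ)
    (hκ : ∀ p, κ p ∈ Icc a 1) (hg : Measurable g) (hh : Measurable h)
    {π : Measure (X × Y)} (hπ : π = (μ.prod ν).withDensity fun p => κ p * (g p.1 * h p.2))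
    {A : Set X} (hA : MeasurableSet A) {ν' : Measure Y} (hν' : ν' ≤ π.map Prod.snd) :
    ∀ᵐ y ∂ν, a ^ 2 * π (A ×ˢ univ) * ν'.rnDeriv ν y
      ≤ π univ * ((π.restrict (A ×ˢ univ)).map Prod.snd).rnDeriv ν y := by
  have hF : Measurable fun p : X × Y => κ p * (g p.1 * h p.2) := by fun_prop
  have hmarg : ∀ {B : Set X}, MeasurableSet B → (π.restrict (B ×ˢ univ)).map Prod.snd
      = ν.withDensity fun y => ∫⁻ x in B, κ (x, y) * (g x * h y) ∂μ := fun hB ↦ by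
    rw [hπ]; exact map_snd_restrict_prod_univ_withDensity hF hB
  have hrnA := (hmarg hA).symm ▸ Measure.rnDeriv_withDensity ν hF.lintegral_prod_left'
  have hrn' : ν'.rnDeriv ν ≤ᵐ[ν] fun y => ∫⁻ x in univ, κ (x, y) * (g x * h y) ∂μ := by
    refine Measure.rnDeriv_le_of_le_withDensity ?_
    rwa [← hmarg MeasurableSet.univ, univ_prod_univ, Measure.restrict_univ]
  have hmassA : π (A ×ˢ univ) ≤ (∫⁻ x in A, g x ∂μ) * ∫⁻ y, h y ∂ν :=
    hπ ▸ withDensity_mul_prod_apply_prod_univ_le hκm hκ hg hh hA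
  have hmass : a * ((∫⁻ x in univ, g x ∂μ) * ∫⁻ y, h y ∂ν) ≤ π univ := by
    rw [← univ_prod_univ, hπ]
    exact le_withDensity_mul_prod_apply_prod_univ hκm hκ hg hh MeasurableSet.univ
  filter_upwards [hrnA, hrn'] with y hyA hy'
  rw [hyA]
  calc a ^ 2 * π (A ×ˢ univ) * ν'.rnDeriv ν y
      ≤ a ^ 2 * ((∫⁻ x in A, g x ∂μ) * ∫⁻ y, h y ∂ν)
          * ((∫⁻ x in univ, g x ∂μ) * h y) := by
        gcongr
        exact hy'.trans (setLIntegral_mul_prod_le hκ hg univ y)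
    _ = a * ((∫⁻ x in univ, g x ∂μ) * ∫⁻ y, h y ∂ν)
          * (a * ((∫⁻ x in A, g x ∂μ) * h y)) := by
        ring
    _ ≤ π univ * ∫⁻ x in A, κ (x, y) * (g x * h y) ∂μ := by
        gcongr
        exact le_setLIntegral_mul_prod hκ hg A y

end ProductDensity

theorem density_rel_bound_general
    {X Y : Type*} [MeasurableSpace X] [MeasurableSpace Y]
    (μ : Measure X) (ν : Measure Y) [IsProbabilityMeasure μ] [IsProbabilityMeasure ν]
    (c : X × Y → ℝ) (hc : Measurable c) (cmax : ℝ)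
    (hc0 : ∀ p, 0 ≤ c p) (hcmax : ∀ p, c p ≤ cmax)
    (ε : ℝ) (hε : 0 < ε)
    (XJ : Set X) (νJ : Measure Y)
    (u : X → ℝ) (v : Y → ℝ) (hu : LinftyPlus μ u) (hv : LinftyPlus ν v)
    (π : Measure (X × Y)) (hπdef : π = (Kmeas μ ν c ε).withDensity (prodDensity u v))
    (hplan : π ∈ Coupling (μ.restrict XJ) νJ)
    (Xi : Set X) (hXi : MeasurableSet Xi) (hXisub : Xi ⊆ XJ)
    (νi : Measure Y) (hνi : νi = (π.restrict (Xi ×ˢ Set.univ)).map Prod.snd) :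
    ∀ ν' : Measure Y, ν' ≤ νJ →
      ∀ᵐ y ∂ν,
        Real.exp (-(2 * cmax) / ε) * (μ Xi).toReal * (ν'.rnDeriv ν y).toReal ≤
          (νi.rnDeriv ν y).toReal := by
  intro ν' hν'
  obtain ⟨hum, hu0, -⟩ := hu
  have hmass : π univ ≤ 1 := by
    rw [← univ_prod_univ, Coupling.apply_prod_univ hplan MeasurableSet.univ,
      Measure.restrict_apply_univ]
    exact prob_le_one
  have hπXi : π (Xi ×ˢ univ) = μ Xi := by
    rw [Coupling.apply_prod_univ hplan hXi, Measure.restrict_apply hXi,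
      inter_eq_self_of_subset_left hXisub]
  have : IsFiniteMeasure π := ⟨hmass.trans_lt one_lt_top⟩
  have hbound := mul_rnDeriv_le_rnDeriv_map_snd_restrict (hc.neg.div_const ε).exp.ennreal_ofReal
    (fun p ↦ ofReal_exp_neg_div_mem_Icc (hc0 p) (hcmax p) hε) hum.ennreal_ofReal
    hv.1.ennreal_ofReal (hπdef.trans (Kmeas_withDensity_prodDensity hc ε hum hv.1 hu0)) hXi
    (hν'.trans_eq hplan.2.symm)
  rw [← hνi] at hbound
  have : IsFiniteMeasure νi := hνi ▸ inferInstance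
  filter_upwards [hbound, Measure.rnDeriv_lt_top νi ν] with y hy hfin
  have hexp : Real.exp (-(2 * cmax) / ε) = Real.exp (-cmax / ε) ^ 2 := by
    rw [← Real.exp_nat_mul]; ring_nf
  rw [hexp, ← hπXi, ← ENNReal.toReal_ofReal (Real.exp_nonneg (-cmax / ε)),
    ← ENNReal.toReal_pow, ← ENNReal.toReal_mul, ← ENNReal.toReal_mul]
  exact ENNReal.toReal_mono hfin.ne (hy.trans (mul_le_of_le_one_left' hmass))

/-- Lemma 2.9 (v), eq. (2.16): one-step lower bound on the basic
cell `Y`-marginal density: for any `ν' ≤ ν_J`,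
`dνᵢ/dν ≥ exp(−2‖c‖/ε)·μ(Xᵢ)·dν'/dν` a.e. -/
theorem density_rel_bound
    {X Y : Type*} [MetricSpace X] [CompactSpace X] [MeasurableSpace X] [BorelSpace X]
    [MetricSpace Y] [CompactSpace Y] [MeasurableSpace Y] [BorelSpace Y]
    (μ : Measure X) (ν : Measure Y) [IsProbabilityMeasure μ] [IsProbabilityMeasure ν]
    (c : X × Y → ℝ) (hc : Measurable c) (cmax : ℝ)
    (hc0 : ∀ p, 0 ≤ c p) (hcmax : ∀ p, c p ≤ cmax)
    (ε : ℝ) (hε : 0 < ε)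
    (XJ : Set X) (hXJ : MeasurableSet XJ) (hXJpos : 0 < μ XJ)
    (νJ : Measure Y) (hνJle : νJ ≤ ν) (hνJmass : νJ Set.univ = μ XJ)
    (u : X → ℝ) (v : Y → ℝ) (hu : LinftyPlus μ u) (hv : LinftyPlus ν v)
    (π : Measure (X × Y)) (hπdef : π = (Kmeas μ ν c ε).withDensity (prodDensity u v))
    (hplan : π ∈ Coupling (μ.restrict XJ) νJ)
    (Xi : Set X) (hXi : MeasurableSet Xi) (hXisub : Xi ⊆ XJ) (hXipos : 0 < μ Xi)
    (νi : Measure Y) (hνi : νi = (π.restrict (Xi ×ˢ Set.univ)).map Prod.snd) :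
    ∀ ν' : Measure Y, ν' ≤ νJ →
      ∀ᵐ y ∂ν,
        Real.exp (-(2 * cmax) / ε) * (μ Xi).toReal * (ν'.rnDeriv ν y).toReal ≤
          (νi.rnDeriv ν y).toReal :=
  density_rel_bound_general μ ν c hc cmax hc0 hcmax ε hε XJ νJ u v hu hv π hπdef hplan Xi hXi hXisub
    νi hνi
end
end
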